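/- If q' ≥ 2 with (q' : G) ∈ N_{p,q·q'}, and the division sequence C_{p,q} has a single equivalence class (every positive integer is E_{p,q}-equivalent to 1), then N_{p,q·q'} = ⊤, i.e., the quotient group H_{p,q·q'} is trivial. -/

import Mathlib

abbrev G : Type := {x : ℚ // 0 < x}

def toG (c : ℕ+) : G := ⟨(c : ℚ), by exact_mod_cast c.pos⟩

def Cmap (p q : ℕ+) (c : ℕ+) : ℕ+ :=
  if h : (q : ℕ) ∣ (c : ℕ) then
    ⟨(c : ℕ) / (q : ℕ), Nat.div_pos (Nat.le_of_dvd c.pos h) q.pos⟩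
  else p * c + 1

def E (p q : ℕ+) : ℕ+ → ℕ+ → Prop := Relation.EqvGen (fun c d => d = Cmap p q c)

def Npq (p q : ℕ+) : Subgroup G :=
  Subgroup.closure ({toG q} ∪ {x : G | ∃ c d : ℕ+, E p q c d ∧ x = toG c / toG d})

/-! Write `N = N_{p,q q'}`. Then `q = (q q') / q'` lies in `N`. A step `c ↦ c / q` of `C_{p,q}` changes `c`
by the factor `q ∈ N`, and a step `c ↦ p c + 1` (taken when `q ∤ c`, hence `q q' ∤ c`) is also a step
of `C_{p,q q'}`, so its ratio is a generator of `N`. Hence `E_{p,q}`-equivalent integers have their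
ratio in `N`; as everything is `E_{p,q}`-equivalent to `1`, every positive integer lies in `N`,
and these generate `G`. -/

lemma toG_mul (a b : ℕ+) : toG (a * b) = toG a * toG b :=
  Subtype.ext (by simp [toG])

lemma toG_one : toG 1 = 1 :=
  Subtype.ext (by simp [toG])

lemma coe_Cmap_of_dvd (p : ℕ+) {q c : ℕ+} (h : (q : ℕ) ∣ c) :
    (Cmap p q c : ℕ) = c / q :=
  congrArg PNat.val (dif_pos h)

lemma Cmap_of_not_dvd (p : ℕ+) {q c : ℕ+} (h : ¬ (q : ℕ) ∣ c) : Cmap p q c = p * c + 1 :=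
  dif_neg h

lemma toG_eq_mul_toG_Cmap_of_dvd (p : ℕ+) {q c : ℕ+} (h : (q : ℕ) ∣ c) :
    toG c = toG q * toG (Cmap p q c) := by
  rw [← toG_mul]
  congr 1
  apply PNat.eq
  rw [PNat.mul_coe, coe_Cmap_of_dvd p h, Nat.mul_div_cancel' h]

lemma Cmap_mul_of_not_dvd (p q' : ℕ+) {q c : ℕ+} (h : ¬ (q : ℕ) ∣ c) :
    Cmap p (q * q') c = Cmap p q c := by
  have h' : ¬ ((q * q' : ℕ+) : ℕ) ∣ c := fun hc => h (dvd_trans (Dvd.intro _ rfl) hc)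
  rw [Cmap_of_not_dvd p h, Cmap_of_not_dvd p h']

lemma Relation.EqvGen.div_mem {α M : Type*} [Group M] {r : α → α → Prop} {f : α → M}
    {H : Subgroup M} (hr : ∀ a b, r a b → f a / f b ∈ H) {a b : α} (hab : Relation.EqvGen r a b) :
    f a / f b ∈ H := by
  induction hab with
  | rel a b h => exact hr a b h
  | refl a => simp
  | symm a b _ ih => simpa using inv_mem ih
  | trans a b c _ _ ih₁ ih₂ => simpa using mul_mem ih₁ ih₂

lemma toG_mem_Npq (p q : ℕ+) : toG q ∈ Npq p q :=
  Subgroup.subset_closure (Or.inl rfl)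

lemma div_mem_Npq_of_E {p q c d : ℕ+} (h : E p q c d) : toG c / toG d ∈ Npq p q :=
  Subgroup.subset_closure (Or.inr ⟨c, d, h, rfl⟩)

lemma div_mem_Npq_mul_of_E {p q q' c d : ℕ+} (h : toG q' ∈ Npq p (q * q')) (hcd : E p q c d) :
    toG c / toG d ∈ Npq p (q * q') := by
  have hq : toG q ∈ Npq p (q * q') := by
    simpa [toG_mul] using div_mem (toG_mem_Npq p (q * q')) h
  refine Relation.EqvGen.div_mem (fun c d hstep => ?_) hcd
  subst hstep
  by_cases hdvd : (q : ℕ) ∣ c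
  · simpa [toG_eq_mul_toG_Cmap_of_dvd p hdvd] using hq
  · rw [← Cmap_mul_of_not_dvd p q' hdvd]
    exact div_mem_Npq_of_E (Relation.EqvGen.rel _ _ rfl)

lemma eq_top_of_forall_toG_mem {H : Subgroup G} (h : ∀ c, toG c ∈ H) : H = ⊤ := by
  refine eq_top_iff.2 fun ⟨r, hr⟩ _ => ?_
  have hnum : 0 < r.num.toNat := by have := Rat.num_pos.2 hr; omega
  have hr_eq : (⟨r, hr⟩ : G) = toG ⟨_, hnum⟩ / toG ⟨r.den, r.pos⟩ := by
    apply Subtype.ext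
    change r = ((r.num.toNat : ℕ) : ℚ) / ((r.den : ℕ) : ℚ)
    rw [show ((r.num.toNat : ℕ) : ℚ) = (r.num : ℚ) by
      exact_mod_cast Int.toNat_of_nonneg (Rat.num_pos.2 hr).le, Rat.num_div_den]
  rw [hr_eq]
  exact div_mem (h _) (h _)

theorem stmt11_general (p q q' : ℕ+)
    (h : toG q' ∈ Npq p (q * q')) (hone : ∀ c : ℕ+, E p q c 1) :
    Npq p (q * q') = ⊤ ∧ Subsingleton (G ⧸ Npq p (q * q')) := by
  have htop : Npq p (q * q') = ⊤ := eq_top_of_forall_toG_mem fun c => by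
    simpa [toG_one] using div_mem_Npq_mul_of_E h (hone c)
  exact ⟨htop, htop ▸ QuotientGroup.subsingleton_quotient_top⟩

theorem stmt11 (p q q' : ℕ+) (hp : 1 ≤ p) (hq : 2 ≤ q) (hq' : 2 ≤ q')
    (h : toG q' ∈ Npq p (q * q')) (hone : ∀ c : ℕ+, E p q c 1) :
    Npq p (q * q') = ⊤ ∧ Subsingleton (G ⧸ Npq p (q * q')) :=
  stmt11_general p q q' h hone
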